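/- Let G be a connected graph of order n ≥ 2 satisfying OS(G) = mr_+^R(G) = mr_+^C(G), and let H be a connected graph (of order ≥ 2) satisfying OS(H) = mr_+^R(H) = mr_+^C(H). Then mr_+^R(G ∘ H) = mr_+^C(G ∘ H) = n·mr_+(H) + mr_+(G), where G ∘ H is the corona product of G with H. -/

import Mathlib

open scoped ComplexOrder

/-- The minimum positive semidefinite rank of a simple graph `G` over the field `𝕜`
(`𝕜 = ℝ` gives `mr₊^ℝ`, `𝕜 = ℂ` gives `mr₊^ℂ`): the minimum rank over all positive
semidefinite Hermitian matrices whose off-diagonal zero/nonzero pattern matches `G`. -/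
noncomputable def mrPlus (𝕜 : Type) [RCLike 𝕜] {V : Type} [Fintype V] [DecidableEq V]
    (G : SimpleGraph V) : ℕ :=
  sInf {r : ℕ | ∃ A : Matrix V V 𝕜, A.PosSemidef ∧
    (∀ i j : V, i ≠ j → (A i j ≠ 0 ↔ G.Adj i j)) ∧ A.rank = r}

/-- `G` is a frame graph in the `d`-dimensional inner product space over `𝕜`:
there is a spanning family (frame) `f` indexed by the vertices such that distinct
vertices are adjacent iff the corresponding vectors are non-orthogonal. -/
def IsFrameGraphIn (𝕜 : Type) [RCLike 𝕜] {V : Type} (G : SimpleGraph V) (d : ℕ) : Prop :=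
  ∃ f : V → EuclideanSpace 𝕜 (Fin d),
    Submodule.span 𝕜 (Set.range f) = ⊤ ∧
    ∀ i j : V, i ≠ j → ((inner 𝕜 (f i) (f j) : 𝕜) ≠ 0 ↔ G.Adj i j)

/-- The strong product of two simple graphs. -/
def strongProd {α β : Type} (G : SimpleGraph α) (H : SimpleGraph β) :
    SimpleGraph (α × β) where
  Adj x y := (x.1 = y.1 ∧ H.Adj x.2 y.2) ∨ (x.2 = y.2 ∧ G.Adj x.1 y.1) ∨
    (G.Adj x.1 y.1 ∧ H.Adj x.2 y.2)
  symm := by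
    constructor
    rintro ⟨a, b⟩ ⟨c, d⟩ (⟨h1, h2⟩ | ⟨h1, h2⟩ | ⟨h1, h2⟩)
    · exact Or.inl ⟨h1.symm, h2.symm⟩
    · exact Or.inr (Or.inl ⟨h1.symm, h2.symm⟩)
    · exact Or.inr (Or.inr ⟨h1.symm, h2.symm⟩)
  loopless := by
    constructor
    rintro ⟨a, b⟩ (⟨_, h⟩ | ⟨_, h⟩ | ⟨h, _⟩)
    · exact H.loopless.irrefl b h
    · exact G.loopless.irrefl a h
    · exact G.loopless.irrefl a h

/-- The join `G ∨ H` of two graphs with disjoint vertex sets. -/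
def joinGraph {α β : Type} (G : SimpleGraph α) (H : SimpleGraph β) :
    SimpleGraph (α ⊕ β) where
  Adj x y := match x, y with
    | Sum.inl a, Sum.inl b => G.Adj a b
    | Sum.inr a, Sum.inr b => H.Adj a b
    | Sum.inl _, Sum.inr _ => True
    | Sum.inr _, Sum.inl _ => True
  symm := by
    constructor
    rintro (a | a) (b | b) h
    · exact h.symm
    · trivial
    · trivial
    · exact h.symm
  loopless := by
    constructor
    rintro (a | a) h
    · exact G.loopless.irrefl a h
    · exact H.loopless.irrefl a h

/-- The vertex-sum `G · H` of `G` and `H`, obtained by identifying the vertex `a` of `G`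
with the vertex `b` of `H` (and no other vertices or edges shared). -/
def vertexSum {α β : Type} (G : SimpleGraph α) (H : SimpleGraph β) (a : α) (b : β) :
    SimpleGraph (α ⊕ {y : β // y ≠ b}) where
  Adj x y := match x, y with
    | Sum.inl u, Sum.inl u' => G.Adj u u'
    | Sum.inr v, Sum.inr v' => H.Adj v.1 v'.1
    | Sum.inl u, Sum.inr v => u = a ∧ H.Adj b v.1
    | Sum.inr v, Sum.inl u => u = a ∧ H.Adj b v.1
  symm := by
    constructor
    rintro (u | v) (u' | v') h
    · exact h.symm
    · exact h
    · exact h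
    · exact h.symm
  loopless := by
    constructor
    rintro (u | v) h
    · exact G.loopless.irrefl u h
    · exact H.loopless.irrefl v.1 h

/-- The corona product `G ∘ H`: one copy of `G`, one copy of `H` for each vertex of `G`,
with every vertex of the `i`-th copy of `H` joined to the `i`-th vertex of `G`. -/
def corona {α β : Type} (G : SimpleGraph α) (H : SimpleGraph β) :
    SimpleGraph (α ⊕ α × β) where
  Adj x y := match x, y with
    | Sum.inl u, Sum.inl u' => G.Adj u u'
    | Sum.inr p, Sum.inr q => p.1 = q.1 ∧ H.Adj p.2 q.2
    | Sum.inl u, Sum.inr p => u = p.1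
    | Sum.inr p, Sum.inl u => u = p.1
  symm := by
    constructor
    rintro (u | p) (u' | q) h
    · exact h.symm
    · exact h
    · exact h
    · exact ⟨h.1.symm, h.2.symm⟩
  loopless := by
    constructor
    rintro (u | p) h
    · exact G.loopless.irrefl u h
    · exact H.loopless.irrefl p.2 h.2

/-- `v : Fin m → V` is an OS-vertex set of `G`: the vertices are distinct, and for each `k`
there is `w` adjacent to `v k`, different from all `v l` with `l ≤ k`, and non-adjacent to
every `v l` (`l < k`) lying in the connected component of `v k` in the subgraph induced by
`{v 0, …, v k}`. -/
def IsOSSet {V : Type} (G : SimpleGraph V) {m : ℕ} (v : Fin m → V) : Prop :=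
  Function.Injective v ∧
  ∀ k : Fin m, ∃ w : V,
    G.Adj (v k) w ∧
    (∀ l : Fin m, l ≤ k → w ≠ v l) ∧
    ∀ l : Fin m, (hl : l < k) →
      (G.induce {x : V | ∃ l' : Fin m, l' ≤ k ∧ x = v l'}).Reachable
        ⟨v l, ⟨l, le_of_lt hl, rfl⟩⟩ ⟨v k, ⟨k, le_refl k, rfl⟩⟩ →
      ¬ G.Adj w (v l)

/-- The OS-number of `G`: the maximum cardinality of an OS-vertex set of `G`. -/
noncomputable def OSNumber {V : Type} (G : SimpleGraph V) : ℕ :=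
  sSup {m : ℕ | ∃ v : Fin m → V, IsOSSet G v}


/-!
Via Gram matrices, `mr₊(G)` is the least dimension of an inner product space carrying a faithful
orthogonal representation of `G` (distinct vertices adjacent iff their vectors are not
orthogonal).

Lower bound: in a representation of `G ∘ H` the `n` copies of `H` span pairwise orthogonal
subspaces `Wᵢ`, each of dimension at least `mr₊(H)`, and the vector of the vertex `i` of `G` is
orthogonal to every `Wⱼ` with `j ≠ i`. Removing from it its projection onto `Wᵢ` changes none of
the inner products between vertices of `G`, so these differences represent `G` inside the
orthogonal complement of all the `Wᵢ`; hence the dimension is at least `n·mr₊(H) + mr₊(G)`.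

Upper bound: put a representation of `G` and `n` copies of one of `H` in orthogonal summands, and
add to the vector of the vertex `i` a vector `x` of the `i`-th copy that is orthogonal to no vector
of the representation of `H`. Such an `x` exists because these vectors are nonzero (`H` has no
isolated vertex) and a vector space over an infinite field is not a finite union of hyperplanes.
-/

open Module Submodule Set
open scoped InnerProductSpace Function

variable {𝕜 : Type} [RCLike 𝕜]

namespace SimpleGraph

/-- The Gram matrices of such families `f` are exactly the matrices over which `mrPlus` minimises
the rank. -/
def IsOrthogonalRep (𝕜 : Type) [RCLike 𝕜] {V E : Type} [NormedAddCommGroup E]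
    [InnerProductSpace 𝕜 E] (G : SimpleGraph V) (f : V → E) : Prop :=
  ∀ i j, i ≠ j → (⟪f i, f j⟫_𝕜 ≠ 0 ↔ G.Adj i j)

namespace IsOrthogonalRep

variable {V E : Type} [NormedAddCommGroup E] [InnerProductSpace 𝕜 E] {G : SimpleGraph V}
  {f : V → E}

lemma inner_eq_zero (hf : G.IsOrthogonalRep 𝕜 f) {i j : V} (hij : i ≠ j) (hadj : ¬G.Adj i j) :
    ⟪f i, f j⟫_𝕜 = 0 :=
  not_not.mp fun h => hadj ((hf i j hij).mp h)

lemma ne_zero_of_adj (hf : G.IsOrthogonalRep 𝕜 f) {i j : V} (hij : G.Adj i j) : f i ≠ 0 :=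
  fun h => (hf i j hij.ne).mpr hij (by simp [h])

lemma comap {W : Type} (hf : G.IsOrthogonalRep 𝕜 f) {φ : W → V} (hφ : φ.Injective) :
    (G.comap φ).IsOrthogonalRep 𝕜 (f ∘ φ) :=
  fun i j hij => hf (φ i) (φ j) (hφ.ne hij)

end IsOrthogonalRep

end SimpleGraph

lemma Matrix.rank_gram {ι E : Type} [Fintype ι] [NormedAddCommGroup E] [InnerProductSpace 𝕜 E]
    [FiniteDimensional 𝕜 E] (v : ι → E) :
    (Matrix.gram 𝕜 v).rank = finrank 𝕜 (span 𝕜 (range v)) := by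
  let b := stdOrthonormalBasis 𝕜 E
  rw [Matrix.gram_eq_conjTranspose_mul b, Matrix.rank_conjTranspose_mul_self,
    Matrix.rank_eq_finrank_span_cols]
  let e : E ≃ₗ[𝕜] (Fin (finrank 𝕜 E) → 𝕜) := b.repr.toLinearEquiv.trans (WithLp.linearEquiv 2 𝕜 _)
  have hcols : range (Matrix.of fun i j => b.repr (v j) i).col = e '' range v := by
    ext
    simp [e, Matrix.col]
    rfl
  rw [hcols, ← LinearEquiv.coe_coe, span_image, LinearEquiv.finrank_map_eq]

open scoped MatrixOrder in
lemma Matrix.PosSemidef.exists_eq_gram {n : Type} [Fintype n] [DecidableEq n]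
    {A : Matrix n n 𝕜} (hA : A.PosSemidef) :
    ∃ v : n → EuclideanSpace 𝕜 n, A = Matrix.gram 𝕜 v := by
  obtain ⟨B, rfl⟩ := CStarAlgebra.nonneg_iff_eq_star_mul_self.mp hA.nonneg
  refine ⟨fun i => WithLp.toLp 2 (B.col i), ?_⟩
  rw [Matrix.gram_eq_conjTranspose_mul (EuclideanSpace.basisFun n 𝕜)]
  simp [Matrix.star_eq_conjTranspose]
  rfl

namespace SimpleGraph

variable {V : Type} [Fintype V] [DecidableEq V] (G : SimpleGraph V)

/-- The incidence vectors: for `i ≠ j` the only edge that can contain both is `s(i, j)`. -/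
lemma exists_isOrthogonalRep : ∃ f : V → EuclideanSpace 𝕜 (Sym2 V), G.IsOrthogonalRep 𝕜 f := by
  classical
  refine ⟨fun v => WithLp.toLp 2 fun e => if v ∈ e ∧ e ∈ G.edgeSet then 1 else 0,
    fun i j hij => ?_⟩
  have hterm : ∀ e : Sym2 V, ⟪(if i ∈ e ∧ e ∈ G.edgeSet then 1 else 0 : 𝕜),
      if j ∈ e ∧ e ∈ G.edgeSet then 1 else 0⟫_𝕜 =
        if e = s(i, j) then if G.Adj i j then 1 else 0 else 0 := by
    intro e
    by_cases he : e = s(i, j)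
    · subst he
      by_cases h : G.Adj i j <;> simp [h]
    · have : ¬(i ∈ e ∧ j ∈ e) := by rwa [Sym2.mem_and_mem_iff hij]
      split_ifs <;> simp_all
  simp only [PiLp.inner_apply, hterm, Finset.sum_ite_eq', Finset.mem_univ, if_true]
  split_ifs <;> simp_all

variable {G}

lemma mrPlus_le_finrank_span {E : Type} [NormedAddCommGroup E] [InnerProductSpace 𝕜 E]
    [FiniteDimensional 𝕜 E] {f : V → E} (hf : G.IsOrthogonalRep 𝕜 f) :
    mrPlus 𝕜 G ≤ finrank 𝕜 (span 𝕜 (range f)) := by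
  rw [← Matrix.rank_gram]
  exact Nat.sInf_le ⟨_, Matrix.posSemidef_gram 𝕜 f, hf, rfl⟩

variable (𝕜 G) in
lemma exists_isOrthogonalRep_euclideanSpace_mrPlus :
    ∃ f : V → EuclideanSpace 𝕜 (Fin (mrPlus 𝕜 G)), G.IsOrthogonalRep 𝕜 f := by
  obtain ⟨f₀, hf₀⟩ := G.exists_isOrthogonalRep (𝕜 := 𝕜)
  have hne : {r : ℕ | ∃ A : Matrix V V 𝕜, A.PosSemidef ∧
      (∀ i j, i ≠ j → (A i j ≠ 0 ↔ G.Adj i j)) ∧ A.rank = r}.Nonempty :=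
    ⟨_, _, Matrix.posSemidef_gram 𝕜 f₀, hf₀, rfl⟩
  obtain ⟨A, hA, hpat, hrank⟩ := Nat.sInf_mem hne
  obtain ⟨v, rfl⟩ := hA.exists_eq_gram
  rw [Matrix.rank_gram] at hrank
  let b := (stdOrthonormalBasis 𝕜 (span 𝕜 (range v))).reindex (finCongr hrank)
  refine ⟨fun i => b.repr (⟨v i, subset_span (mem_range_self i)⟩ : span 𝕜 (range v)),
    fun i j hij => ?_⟩
  show ⟪b.repr _, b.repr _⟫_𝕜 ≠ 0 ↔ _
  rw [LinearIsometryEquiv.inner_map_map, Submodule.coe_inner, ← Matrix.gram_apply]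
  exact hpat i j hij

end SimpleGraph

open SimpleGraph

namespace Submodule

variable {E ι : Type} [NormedAddCommGroup E] [InnerProductSpace 𝕜 E]

lemma sum_finrank_le_finrank_of_pairwise_isOrtho [Fintype ι] [FiniteDimensional 𝕜 E]
    {W : ι → Submodule 𝕜 E} (hW : Pairwise ((· ⟂ ·) on W)) :
    ∑ i, finrank 𝕜 (W i) ≤ finrank 𝕜 E := by
  classical
  rw [← Module.finrank_directSum]
  exact LinearMap.finrank_le_finrank_of_injective
    (orthogonalFamily_iff_pairwise.mpr hW).independent.dfinsupp_lsum_injective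

variable {W : ι → Submodule 𝕜 E} [∀ i, (W i).HasOrthogonalProjection] {u : ι → E}

lemma inner_sub_starProjection_sub_starProjection (hW : Pairwise ((· ⟂ ·) on W))
    (hu : ∀ i j, i ≠ j → u i ∈ (W j)ᗮ) {i j : ι} (hij : i ≠ j) :
    ⟪u i - (W i).starProjection (u i), u j - (W j).starProjection (u j)⟫_𝕜 = ⟪u i, u j⟫_𝕜 := by
  rw [inner_sub_left, inner_sub_right, inner_sub_right,
    inner_left_of_mem_orthogonal (starProjection_apply_mem _ _) (hu i j hij),
    inner_right_of_mem_orthogonal (starProjection_apply_mem _ _) (hu j i hij.symm),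
    (hW hij).inner_eq (starProjection_apply_mem _ _) (starProjection_apply_mem _ _)]
  simp

lemma sub_starProjection_mem_orthogonal_of_pairwise_isOrtho (hW : Pairwise ((· ⟂ ·) on W))
    (hu : ∀ i j, i ≠ j → u i ∈ (W j)ᗮ) (i j : ι) :
    u i - (W i).starProjection (u i) ∈ (W j)ᗮ := by
  rcases eq_or_ne i j with rfl | hij
  · exact sub_starProjection_mem_orthogonal _
  · exact sub_mem (hu i j hij) (isOrtho_iff_le.mp (hW hij) (starProjection_apply_mem _ _))

end Submodule

lemma PiLp.inner_single_left {ι : Type} {β : ι → Type} [Fintype ι] [DecidableEq ι]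
    [∀ i, NormedAddCommGroup (β i)] [∀ i, InnerProductSpace 𝕜 (β i)] (i : ι) (u : β i)
    (y : PiLp 2 β) : ⟪PiLp.single 2 i u, y⟫_𝕜 = ⟪u, y i⟫_𝕜 := by
  rw [PiLp.inner_apply, Finset.sum_eq_single i]
  · simp
  · intro j _ hji
    simp [Pi.single_eq_of_ne hji]
  · simp

lemma PiLp.inner_single_single {ι E : Type} [Fintype ι] [DecidableEq ι] [NormedAddCommGroup E]
    [InnerProductSpace 𝕜 E] (i j : ι) (u v : E) :
    ⟪PiLp.single 2 (β := fun _ => E) i u, PiLp.single 2 j v⟫_𝕜 =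
      if i = j then ⟪u, v⟫_𝕜 else 0 := by
  rcases eq_or_ne i j with rfl | hij
  · simp [PiLp.inner_single_left]
  · simp [PiLp.inner_single_left, hij]

lemma exists_forall_inner_ne_zero {ι E : Type} [Finite ι] [NormedAddCommGroup E]
    [InnerProductSpace 𝕜 E] {v : ι → E} (hv : ∀ i, v i ≠ 0) : ∃ x : E, ∀ i, ⟪v i, x⟫_𝕜 ≠ 0 :=
  Module.Dual.exists_forall_ne_zero_of_forall_exists (fun i => innerₛₗ 𝕜 (v i))
    fun i => ⟨v i, inner_self_ne_zero.mpr (hv i)⟩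

section Corona

variable {α β : Type} {G : SimpleGraph α} {H : SimpleGraph β}

@[simp] lemma corona_adj_inl_inl {u v : α} : (corona G H).Adj (.inl u) (.inl v) ↔ G.Adj u v :=
  Iff.rfl

@[simp] lemma corona_adj_inr_inr {p q : α × β} :
    (corona G H).Adj (.inr p) (.inr q) ↔ p.1 = q.1 ∧ H.Adj p.2 q.2 :=
  Iff.rfl

@[simp] lemma corona_adj_inl_inr {u : α} {p : α × β} :
    (corona G H).Adj (.inl u) (.inr p) ↔ u = p.1 :=
  Iff.rfl

@[simp] lemma corona_adj_inr_inl {u : α} {p : α × β} :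
    (corona G H).Adj (.inr p) (.inl u) ↔ u = p.1 :=
  Iff.rfl

lemma comap_corona_inr (i : α) : (corona G H).comap (fun p => .inr (i, p)) = H := by
  ext
  simp

namespace SimpleGraph.IsOrthogonalRep

variable {E : Type} [NormedAddCommGroup E] [InnerProductSpace 𝕜 E] {f : α ⊕ α × β → E}

lemma pairwise_isOrtho_span_corona_copy (hf : (corona G H).IsOrthogonalRep 𝕜 f) :
    Pairwise ((· ⟂ ·) on fun i => span 𝕜 (range fun p => f (.inr (i, p)))) := by
  intro i j hij
  rw [Function.onFun, isOrtho_span]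
  rintro _ ⟨p, rfl⟩ _ ⟨q, rfl⟩
  exact hf.inner_eq_zero (by simp [hij]) (by simp [hij])

lemma mem_orthogonal_span_corona_copy (hf : (corona G H).IsOrthogonalRep 𝕜 f) {i j : α}
    (hij : i ≠ j) : f (.inl i) ∈ (span 𝕜 (range fun q => f (.inr (j, q))))ᗮ := by
  have : span 𝕜 {f (.inl i)} ⟂ span 𝕜 (range fun q => f (.inr (j, q))) := by
    rw [isOrtho_span]
    rintro _ rfl _ ⟨q, rfl⟩
    exact hf.inner_eq_zero (by simp) (by simpa using hij)
  exact isOrtho_iff_le.mp this (mem_span_singleton_self _)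

variable [Fintype α] [DecidableEq α] [Fintype β] [DecidableEq β] [FiniteDimensional 𝕜 E]

theorem card_mul_mrPlus_add_mrPlus_le_finrank (hf : (corona G H).IsOrthogonalRep 𝕜 f) :
    Fintype.card α * mrPlus 𝕜 H + mrPlus 𝕜 G ≤ finrank 𝕜 E := by
  set W : α → Submodule 𝕜 E := fun i => span 𝕜 (range fun p => f (.inr (i, p)))
  have hW := hf.pairwise_isOrtho_span_corona_copy
  have hu : ∀ i j, i ≠ j → f (.inl i) ∈ (W j)ᗮ := fun i j => hf.mem_orthogonal_span_corona_copy
  have hWH : ∀ i, mrPlus 𝕜 H ≤ finrank 𝕜 (W i) := fun i => by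
    simpa [comap_corona_inr, Function.comp_def] using
      mrPlus_le_finrank_span (hf.comap (φ := fun p => .inr (i, p)) fun _ _ h => by simpa using h)
  set g : α → E := fun i => f (.inl i) - (W i).starProjection (f (.inl i))
  have hg : G.IsOrthogonalRep 𝕜 g := fun i j hij => by
    rw [inner_sub_starProjection_sub_starProjection hW hu hij]
    simpa using hf (.inl i) (.inl j) (by simpa using hij)
  let U : Option α → Submodule 𝕜 E := fun o => o.elim (span 𝕜 (range g)) W
  have hU : Pairwise ((· ⟂ ·) on U) := by
    have hgW : ∀ i, span 𝕜 (range g) ⟂ W i := fun i => by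
      rw [isOrtho_iff_le, span_le]
      rintro _ ⟨j, rfl⟩
      exact sub_starProjection_mem_orthogonal_of_pairwise_isOrtho hW hu j i
    rintro (_ | i) (_ | j) hij
    · exact absurd rfl hij
    · exact hgW j
    · exact (hgW i).symm
    · exact hW fun h => hij (congrArg some h)
  calc Fintype.card α * mrPlus 𝕜 H + mrPlus 𝕜 G
      ≤ ∑ i, finrank 𝕜 (W i) + finrank 𝕜 (span 𝕜 (range g)) :=
        add_le_add (Finset.card_nsmul_le_sum _ _ _ fun i _ => hWH i) (mrPlus_le_finrank_span hg)
    _ = ∑ o, finrank 𝕜 (U o) := by rw [Fintype.sum_option, add_comm]; rfl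
    _ ≤ finrank 𝕜 E := sum_finrank_le_finrank_of_pairwise_isOrtho hU

end SimpleGraph.IsOrthogonalRep

variable [Fintype α] [DecidableEq α] {E₁ E₂ : Type} [NormedAddCommGroup E₁]
  [InnerProductSpace 𝕜 E₁] [NormedAddCommGroup E₂] [InnerProductSpace 𝕜 E₂]
  {a : α → E₁} {b : β → E₂}

lemma SimpleGraph.IsOrthogonalRep.corona (ha : G.IsOrthogonalRep 𝕜 a)
    (hb : H.IsOrthogonalRep 𝕜 b) {x : E₂} (hx : ∀ p, ⟪b p, x⟫_𝕜 ≠ 0) :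
    (corona G H).IsOrthogonalRep 𝕜 (Sum.elim
      (fun i => WithLp.toLp 2 (a i, PiLp.single 2 (β := fun _ : α => E₂) i x))
      (fun q => WithLp.toLp 2 (0, PiLp.single 2 q.1 (b q.2)))) := by
  rintro (i | ⟨i, p⟩) (j | ⟨j, q⟩) hne
  · simpa [PiLp.inner_single_single, ne_of_apply_ne Sum.inl hne] using
      ha i j (ne_of_apply_ne Sum.inl hne)
  · rcases eq_or_ne i j with rfl | hij
    · simpa [PiLp.inner_single_single, inner_eq_zero_symm] using hx q
    · simp [PiLp.inner_single_single, hij]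
  · rcases eq_or_ne i j with rfl | hij
    · simpa [PiLp.inner_single_single] using hx p
    · simp [PiLp.inner_single_single, hij, Ne.symm hij]
  · rcases eq_or_ne i j with rfl | hij
    · simpa [PiLp.inner_single_single] using hb p q (by simpa using hne)
    · simp [PiLp.inner_single_single, hij]

variable [Fintype β] [DecidableEq β] [FiniteDimensional 𝕜 E₁] [FiniteDimensional 𝕜 E₂]

theorem mrPlus_corona_le_finrank_add_card_mul (ha : G.IsOrthogonalRep 𝕜 a)
    (hb : H.IsOrthogonalRep 𝕜 b) (hb₀ : ∀ p, b p ≠ 0) :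
    mrPlus 𝕜 (corona G H) ≤ finrank 𝕜 E₁ + Fintype.card α * finrank 𝕜 E₂ := by
  obtain ⟨x, hx⟩ := exists_forall_inner_ne_zero (𝕜 := 𝕜) hb₀
  calc mrPlus 𝕜 (corona G H)
      ≤ finrank 𝕜 (WithLp 2 (E₁ × PiLp 2 fun _ : α => E₂)) :=
        (mrPlus_le_finrank_span (ha.corona hb hx)).trans (Submodule.finrank_le _)
    _ = finrank 𝕜 E₁ + Fintype.card α * finrank 𝕜 E₂ := by
        simp [(WithLp.linearEquiv 2 𝕜 _).finrank_eq, Module.finrank_prod,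
          Module.finrank_pi_fintype]

theorem mrPlus_corona_eq (G : SimpleGraph α) (hH : ∀ p, ∃ q, H.Adj p q) :
    mrPlus 𝕜 (corona G H) = Fintype.card α * mrPlus 𝕜 H + mrPlus 𝕜 G := by
  obtain ⟨a, ha⟩ := G.exists_isOrthogonalRep_euclideanSpace_mrPlus 𝕜
  obtain ⟨b, hb⟩ := H.exists_isOrthogonalRep_euclideanSpace_mrPlus 𝕜
  obtain ⟨f, hf⟩ := (corona G H).exists_isOrthogonalRep_euclideanSpace_mrPlus 𝕜
  have hb₀ : ∀ p, b p ≠ 0 := fun p => hb.ne_zero_of_adj (hH p).choose_spec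
  apply le_antisymm
  · simpa [add_comm] using mrPlus_corona_le_finrank_add_card_mul ha hb hb₀
  · simpa using hf.card_mul_mrPlus_add_mrPlus_le_finrank

end Corona

theorem mrPlus_corona_general (n m : ℕ) (hm : 2 ≤ m)
    (G : SimpleGraph (Fin n)) (H : SimpleGraph (Fin m))
    (hHc : H.Connected)
    (hG2 : mrPlus ℝ G = mrPlus ℂ G)
    (hH2 : mrPlus ℝ H = mrPlus ℂ H) :
    mrPlus ℝ (corona G H) = n * mrPlus ℝ H + mrPlus ℝ G ∧
    mrPlus ℂ (corona G H) = n * mrPlus ℝ H + mrPlus ℝ G := by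
  have : Nontrivial (Fin m) := Fin.nontrivial_iff_two_le.mpr hm
  have hH := hHc.preconnected.exists_adj_of_nontrivial
  rw [mrPlus_corona_eq G hH, mrPlus_corona_eq G hH, Fintype.card_fin, hG2, hH2]
  exact ⟨rfl, rfl⟩

/-- if `OS(G) = mr₊(G)` and `OS(H) = mr₊(H)` for connected `G`, `H`, then
`mr₊(G ∘ H) = n·mr₊(H) + mr₊(G)`. -/
theorem mrPlus_corona (n m : ℕ) (hn : 2 ≤ n) (hm : 2 ≤ m)
    (G : SimpleGraph (Fin n)) (H : SimpleGraph (Fin m))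
    (hGc : G.Connected) (hHc : H.Connected)
    (hG1 : OSNumber G = mrPlus ℝ G) (hG2 : mrPlus ℝ G = mrPlus ℂ G)
    (hH1 : OSNumber H = mrPlus ℝ H) (hH2 : mrPlus ℝ H = mrPlus ℂ H) :
    mrPlus ℝ (corona G H) = n * mrPlus ℝ H + mrPlus ℝ G ∧
    mrPlus ℂ (corona G H) = n * mrPlus ℝ H + mrPlus ℝ G :=
  mrPlus_corona_general n m hm G H hHc hG2 hH2
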